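/- arXiv:1911.05596 — 4 statements merged into one kernel-verified Lean document; each statement's English description precedes it below -/
import Mathlib

section
/- Let q_1,…,q_g, m_1,…,m_g be positive integers with gcd(q_k, m_k) = 1 for each k, set e_k = q_1⋯q_k, e = e_g, ê_k = e/e_k, B_0 = e and B_k = m_1·ê_1 + ⋯ + m_k·ê_k. Then for every k with 0 ≤ k ≤ g, gcd(B_0, B_1, …, B_k) = ê_k. In particular gcd(B_0, …, B_g) = 1. -/
/-!
Write `ê_k = q_{k+1} ⋯ q_g`, so that `ê_{k-1} = q_k ê_k`, and `B_k = c_k ê_k` where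
`c_0 = 0` and `c_k = c_{k-1} q_k + m_k`. By induction,
`gcd(B_0, …, B_k) = gcd(B_k, ê_{k-1}) = gcd(c_k, q_k) ê_k = gcd(m_k, q_k) ê_k = ê_k`.
-/

open Finset

/-- The integer `c_k` with `B_k = c_k ê_k`. -/
def cofactor (q m : ℕ → ℕ) : ℕ → ℕ
  | 0 => 0
  | k + 1 => cofactor q m k * q (k + 1) + m (k + 1)

lemma coprime_cofactor_succ {q m : ℕ → ℕ} {k : ℕ} (h : Nat.Coprime (q (k + 1)) (m (k + 1))) :
    Nat.Coprime (cofactor q m (k + 1)) (q (k + 1)) := by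
  rw [cofactor, Nat.Coprime, add_comm, Nat.gcd_add_mul_right_left]
  exact h.symm

lemma prod_Ioc_eq_mul_prod_Ioc_add_one (q : ℕ → ℕ) {k g : ℕ} (h : k < g) :
    ∏ j ∈ Ioc k g, q j = q (k + 1) * ∏ j ∈ Ioc (k + 1) g, q j := by
  rw [← insert_Ioc_add_one_left_eq_Ioc h, prod_insert (by simp)]

lemma sum_mul_prod_Ioc_eq_cofactor_mul (q m : ℕ → ℕ) {k g : ℕ} (h : k ≤ g) :
    ∑ i ∈ Icc 1 k, m i * ∏ j ∈ Ioc i g, q j = cofactor q m k * ∏ j ∈ Ioc k g, q j := by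
  induction k with
  | zero => simp [cofactor]
  | succ k ih =>
    rw [sum_Icc_succ_top (by omega), ih (by omega),
      prod_Ioc_eq_mul_prod_Ioc_add_one q (by omega), cofactor]
    ring

lemma gcd_Icc_eq_prod_Ioc {g : ℕ} {q m B : ℕ → ℕ}
    (hcop : ∀ i ∈ Icc 1 g, Nat.Coprime (q i) (m i))
    (hB0 : B 0 = ∏ j ∈ Ioc 0 g, q j)
    (hB : ∀ k, 1 ≤ k → k ≤ g → B k = cofactor q m k * ∏ j ∈ Ioc k g, q j) :
    ∀ k ≤ g, (Icc 0 k).gcd B = ∏ j ∈ Ioc k g, q j := by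
  intro k hk
  induction k with
  | zero => simp [hB0]
  | succ k ih =>
    have hcop_succ : Nat.Coprime (q (k + 1)) (m (k + 1)) := hcop (k + 1) (by simp; omega)
    calc (Icc 0 (k + 1)).gcd B
        = Nat.gcd (B (k + 1)) ((Icc 0 k).gcd B) := by
          rw [← insert_Icc_right_eq_Icc_add_one (by omega), gcd_insert]
          rfl
      _ = Nat.gcd (cofactor q m (k + 1)) (q (k + 1)) * ∏ j ∈ Ioc (k + 1) g, q j := by
          rw [ih (by omega), hB (k + 1) (by omega) hk,
            prod_Ioc_eq_mul_prod_Ioc_add_one (k := k) q hk, Nat.gcd_mul_right]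
      _ = ∏ j ∈ Ioc (k + 1) g, q j := by
          rw [(coprime_cofactor_succ hcop_succ).gcd_eq_one, one_mul]

theorem stmt1_general (g : ℕ) (q m ehat B : ℕ → ℕ)
    (hcop : ∀ i ∈ Icc 1 g, Nat.Coprime (q i) (m i))
    (hehat : ∀ k, ehat k = ∏ j ∈ Icc (k + 1) g, q j)
    (hB0 : B 0 = ∏ j ∈ Icc 1 g, q j)
    (hB : ∀ k, 1 ≤ k → B k = ∑ i ∈ Icc 1 k, m i * ehat i) :
    (∀ k ≤ g, (Icc 0 k).gcd B = ehat k) ∧ (Icc 0 g).gcd B = 1 := by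
  have hehat_Ioc : ∀ k, ehat k = ∏ j ∈ Ioc k g, q j := fun k => by
    rw [hehat, Icc_add_one_left_eq_Ioc]
  have hgcd : ∀ k ≤ g, (Icc 0 k).gcd B = ehat k := by
    simp only [hehat_Ioc]
    refine gcd_Icc_eq_prod_Ioc hcop (by rw [hB0, ← Icc_add_one_left_eq_Ioc, zero_add])
      fun k hk hkg => ?_
    simp only [hB k hk, hehat_Ioc, sum_mul_prod_Ioc_eq_cofactor_mul q m hkg]
  refine ⟨hgcd, ?_⟩
  rw [hgcd g le_rfl, hehat_Ioc, Ioc_self, prod_empty]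

/-- With `gcd (q k) (m k) = 1`, `ê_k = q_{k+1} ⋯ q_g`, `B_0 = e = q_1 ⋯ q_g`
and `B_k = Σ_{i=1}^k m_i ê_i`, one has `gcd(B_0, …, B_k) = ê_k` for all `k ≤ g`;
in particular `gcd(B_0, …, B_g) = 1`. -/
theorem stmt1 (g : ℕ) (q m ehat B : ℕ → ℕ)
    (hq : ∀ i ∈ Icc 1 g, 0 < q i) (hm : ∀ i ∈ Icc 1 g, 0 < m i)
    (hcop : ∀ i ∈ Icc 1 g, Nat.Coprime (q i) (m i))
    (hehat : ∀ k, ehat k = ∏ j ∈ Icc (k + 1) g, q j)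
    (hB0 : B 0 = ∏ j ∈ Icc 1 g, q j)
    (hB : ∀ k, 1 ≤ k → B k = ∑ i ∈ Icc 1 k, m i * ehat i) :
    (∀ k ≤ g, (Icc 0 k).gcd B = ehat k) ∧ (Icc 0 g).gcd B = 1 :=
  stmt1_general g q m ehat B hcop hehat hB0 hB
end

section
/- Let K be a field, and let F ∈ K[y] be monic of degree d. Let N be a positive divisor of d such that N is invertible in K (e.g. the characteristic of K does not divide N). Then there exists a unique monic polynomial ψ ∈ K[y] of degree d/N such that deg(F − ψ^N) < d − d/N. -/
open Polynomial Finset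

-- existence core
lemma approx_ex (K : Type*) [Field K] (F : Polynomial K) (d e N : ℕ)
    (hF : F.Monic) (hd : F.natDegree = d) (hde : d = N * e) (hN : 0 < N)
    (hinv : (N : K) ≠ 0) :
    ∀ k, k ≤ e → ∃ ψ : Polynomial K, ψ.Monic ∧ ψ.natDegree = e ∧
      (F - ψ ^ N).degree < ((d - k : ℕ) : WithBot ℕ) := by
  intro k hk
  induction k with
  | zero =>
    refine ⟨X ^ e, monic_X_pow e, natDegree_X_pow e, ?_⟩
    have h1 : (X ^ e : Polynomial K) ^ N = X ^ d := by
      rw [← pow_mul]; congr 1; rw [hde, Nat.mul_comm]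
    rw [h1]
    have h2 : F.degree = (X ^ d : Polynomial K).degree := by
      rw [degree_X_pow, Polynomial.degree_eq_natDegree hF.ne_zero, hd]
    calc (F - X ^ d).degree < F.degree :=
          degree_sub_lt h2 hF.ne_zero (by simp [hF.leadingCoeff])
      _ = ((d - 0 : ℕ) : WithBot ℕ) := by rw [Polynomial.degree_eq_natDegree hF.ne_zero, hd]; norm_num
  | succ k ih =>
    obtain ⟨ψ, hmon, hdeg, hlt⟩ := ih (le_of_lt (Nat.lt_of_succ_le hk))
    have hke : k + 1 ≤ e := hk
    obtain ⟨n, rfl⟩ : ∃ n, N = n + 1 := ⟨N - 1, by omega⟩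
    set c : K := (F - ψ ^ (n+1)).coeff (d - k - 1) with hc
    set t : Polynomial K := C (c / (n+1)) * X ^ (e - k - 1) with ht
    have hdegt : t.degree < ψ.degree := by
      calc t.degree ≤ ((e - k - 1 : ℕ) : WithBot ℕ) :=
            degree_le_of_natDegree_le (natDegree_C_mul_X_pow_le _ _)
        _ < ((e : ℕ) : WithBot ℕ) := by
            exact_mod_cast show e - k - 1 < e from by omega
        _ = ψ.degree := by rw [Polynomial.degree_eq_natDegree hmon.ne_zero, hdeg]
    have hmon' : (ψ + t).Monic := hmon.add_of_left hdegt
    have hdeg' : (ψ + t).natDegree = e := by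
      rw [natDegree_eq_of_degree_eq (degree_add_eq_left_of_degree_lt hdegt), hdeg]
    refine ⟨ψ + t, hmon', hdeg', ?_⟩
    set M : Polynomial K := ψ ^ n * X ^ (e - k - 1) with hM
    have hMmon : M.Monic := (hmon.pow n).mul (monic_X_pow _)
    have hMdeg : M.natDegree = d - k - 1 := by
      rw [(hmon.pow n).natDegree_mul (monic_X_pow _), natDegree_X_pow,
        hmon.natDegree_pow, hdeg]
      have hne : d = n * e + e := by rw [hde]; ring
      omega
    -- key expansion
    have hexp : F - (ψ + t) ^ (n+1) =
        (F - ψ ^ (n+1) - C c * M) - ∑ m ∈ range n, ψ ^ m * t ^ (n+1-m) * ((n+1).choose m : Polynomial K) := by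
      rw [add_pow, Finset.sum_range_succ, Finset.sum_range_succ]
      have e1 : ψ ^ (n+1) * t ^ (n+1-(n+1)) * ((n+1).choose (n+1) : Polynomial K) = ψ ^ (n+1) := by
        simp
      have e2 : ψ ^ n * t ^ (n+1-n) * ((n+1).choose n : Polynomial K) = C c * M := by
        rw [Nat.choose_succ_self_right]
        have : ((n+1 : ℕ) : Polynomial K) = C ((n+1 : ℕ) : K) := (Polynomial.C_eq_natCast _).symm
        rw [this, ht, hM]
        have hinv' : ((n:K)+1) ≠ 0 := by push_cast at hinv; exact hinv
        have : (c / ((n:K)+1)) * ((n+1 : ℕ) : K) = c := by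
          push_cast
          exact div_mul_cancel₀ c hinv'
        push_cast at this ⊢
        calc ψ ^ n * (C (c / ((n:K)+1)) * X ^ (e - k - 1)) ^ (n + 1 - n) * C ((n:K)+1)
            = C ((c / ((n:K)+1)) * ((n:K)+1)) * (ψ ^ n * X ^ (e - k - 1)) := by
              simp [Nat.succ_sub (le_refl n)]; ring
          _ = C c * (ψ ^ n * X ^ (e - k - 1)) := by rw [this]
      rw [e1, e2]; ring
    rw [hexp]
    have hD : (d - k - 1 : ℕ) = d - (k+1) := by omega
    apply lt_of_le_of_lt (degree_sub_le _ _)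
    rw [max_lt_iff]
    constructor
    · -- part A
      rw [degree_lt_iff_coeff_zero]
      intro m hm
      rw [Polynomial.coeff_sub, Polynomial.coeff_C_mul]
      have hM1 : M.coeff (d - k - 1) = 1 := by
        rw [← hMdeg, Polynomial.coeff_natDegree, hMmon.leadingCoeff]
      rcases eq_or_lt_of_le hm with h | h
      · have h' : m = d - k - 1 := by omega
        rw [h', hM1, ← hc]
        ring
      · have h1 : (F - ψ ^ (n+1)).coeff m = 0 := by
          apply coeff_eq_zero_of_degree_lt
          refine lt_of_lt_of_le hlt ?_
          have hmm : (d - k : ℕ) ≤ m := by omega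
          exact_mod_cast hmm
        have h2 : M.coeff m = 0 := by
          apply coeff_eq_zero_of_natDegree_lt
          rw [hMdeg]
          omega
        rw [h1, h2]; ring
    · -- part B
      apply lt_of_le_of_lt (degree_sum_le _ _)
      rw [Finset.sup_lt_iff (by exact WithBot.bot_lt_coe _)]
      intro m hm
      rw [Finset.mem_range] at hm
      have hb : (ψ ^ m * t ^ (n+1-m) * ((n+1).choose m : Polynomial K)).natDegree
          ≤ m * e + (n+1-m) * (e - k - 1) := by
        apply le_trans (natDegree_mul_le)
        have b1 : (ψ ^ m).natDegree ≤ m * e := by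
          rw [hmon.natDegree_pow, hdeg]
        have b2 : (t ^ (n+1-m)).natDegree ≤ (n+1-m) * (e - k - 1) := by
          apply le_trans natDegree_pow_le
          exact Nat.mul_le_mul_left _ (natDegree_C_mul_X_pow_le _ _)
        calc (ψ ^ m * t ^ (n+1-m)).natDegree + ((n+1).choose m : Polynomial K).natDegree
            ≤ (ψ ^ m).natDegree + (t ^ (n+1-m)).natDegree + 0 := by
              rw [natDegree_natCast]; exact Nat.add_le_add_right (natDegree_mul_le (p := ψ ^ m) (q := t ^ (n+1-m))) _
          _ ≤ m * e + (n+1-m) * (e - k - 1) := by omega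
      apply lt_of_le_of_lt (degree_le_of_natDegree_le hb)
      rw [Nat.cast_lt]
      -- arithmetic: m < n, k+1 ≤ e, d = (n+1)*e
      obtain ⟨r, hr⟩ : ∃ r, e = k + 1 + r := ⟨e - k - 1, by omega⟩
      obtain ⟨s, hs⟩ : ∃ s, n = m + 1 + s := ⟨n - m - 1, by omega⟩
      have h1 : n + 1 - m = 2 + s := by omega
      have h2 : e - k - 1 = r := by omega
      rw [h1, h2, Nat.lt_sub_iff_add_lt, hde, hr, hs]
      ring_nf
      nlinarith

/-- Approximate roots: if `F` is monic of degree `d` over a field `K`, `N` is a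
positive divisor of `d` which is invertible in `K`, then there is a unique monic
`ψ` of degree `d / N` with `deg(F - ψ^N) < d - d/N`. -/
theorem stmt7 (K : Type*) [Field K] (F : Polynomial K) (d N : ℕ)
    (hF : F.Monic) (hd : F.natDegree = d) (hN : 0 < N) (hdvd : N ∣ d)
    (hinv : (N : K) ≠ 0) :
    ∃! ψ : Polynomial K, ψ.Monic ∧ ψ.natDegree = d / N ∧
      (F - ψ ^ N).degree < ((d - d / N : ℕ) : WithBot ℕ) := by
  set e := d / N with he
  have hde : d = N * e := (Nat.mul_div_cancel' hdvd).symm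
  obtain ⟨ψ, h1, h2, h3⟩ := approx_ex K F d e N hF hd hde hN hinv e (le_refl e)
  refine ⟨ψ, ⟨h1, h2, h3⟩, ?_⟩
  rintro φ ⟨hφm, hφd, hφlt⟩
  by_contra hne
  have hsub : φ - ψ ≠ 0 := sub_ne_zero.mpr hne
  set S : Polynomial K := ∑ i ∈ Finset.range N, φ ^ i * ψ ^ (N - 1 - i) with hS
  have hgeo : S * (φ - ψ) = φ ^ N - ψ ^ N := geom_sum₂_mul φ ψ N
  have hScoeff : S.coeff ((N - 1) * e) = (N : K) := by
    rw [hS, Polynomial.finset_sum_coeff]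
    have : ∀ i ∈ Finset.range N, (φ ^ i * ψ ^ (N - 1 - i)).coeff ((N - 1) * e) = 1 := by
      intro i hi
      rw [Finset.mem_range] at hi
      have hmon : (φ ^ i * ψ ^ (N - 1 - i)).Monic := (hφm.pow i).mul (h1.pow _)
      have hndeg : (φ ^ i * ψ ^ (N - 1 - i)).natDegree = (N - 1) * e := by
        rw [(hφm.pow i).natDegree_mul (h1.pow _), hφm.natDegree_pow, h1.natDegree_pow,
          hφd, h2, ← Nat.add_mul]
        congr 1
        omega
      rw [← hndeg, Polynomial.coeff_natDegree, hmon.leadingCoeff]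
    rw [Finset.sum_congr rfl this]
    simp
  have hSd : ((((N - 1) * e : ℕ)) : WithBot ℕ) ≤ S.degree :=
    le_degree_of_ne_zero (by rw [hScoeff]; exact hinv)
  have hφψ : (0 : WithBot ℕ) ≤ (φ - ψ).degree := zero_le_degree_iff.mpr hsub
  have hbig : (((d - e : ℕ)) : WithBot ℕ) ≤ (φ ^ N - ψ ^ N).degree := by
    have heq : ((N - 1) * e : ℕ) = d - e := by
      rw [Nat.sub_one_mul, ← hde]
    rw [← hgeo, degree_mul, ← heq]
    calc (((N - 1) * e : ℕ) : WithBot ℕ) = (((N - 1) * e : ℕ) : WithBot ℕ) + 0 := by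
          rw [add_zero]
      _ ≤ S.degree + (φ - ψ).degree := add_le_add hSd hφψ
  have hsmall : (φ ^ N - ψ ^ N).degree < (((d - e : ℕ)) : WithBot ℕ) := by
    have : φ ^ N - ψ ^ N = (F - ψ ^ N) - (F - φ ^ N) := by ring
    rw [this]
    exact lt_of_le_of_lt (degree_sub_le _ _) (max_lt h3 hφlt)
  exact absurd (lt_of_le_of_lt hbig hsmall) (lt_irrefl _)
end

section
/- Let K be a field of characteristic not dividing d, and let F ∈ K[[x]][y] be a monic Weierstrass polynomial of degree d whose coefficient of y^{d−1} is zero. Suppose the lower boundary polynomial of F equals (y + α x^m)^d for some α ∈ K, α ≠ 0, and some positive integer m. Then this is a contradiction; that is, if F ≠ y^d has no term of degree d − 1 in y, its lower boundary polynomial cannot be a d-th power of a linear form y + α x^m with α ≠ 0. -/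
/-- Let `F ∈ K[[x]][y]` be a monic Weierstrass polynomial of degree `d` whose
coefficient of `y^{d-1}` vanishes, over a field of characteristic not dividing `d`.
Its lower boundary polynomial cannot be `(y + α x^m)^d` with `α ≠ 0`, `m > 0`.
Having lower boundary polynomial `(y + α x^m)^d` means: every Newton point of `F`
lies on or above the line through `(i, m(d-i))`, and the coefficient of `x^{m(d-i)}`
in the coefficient of `y^i` equals `binom(d,i) α^{d-i}`. -/
theorem stmt9 (K : Type*) [Field K] (d : ℕ) (hd : 0 < d) (hchar : (d : K) ≠ 0)
    (F : Polynomial (PowerSeries K)) (hmonic : F.Monic) (hdeg : F.natDegree = d)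
    (hW : ∀ i < d, PowerSeries.constantCoeff (F.coeff i) = 0)
    (hsub : F.coeff (d - 1) = 0)
    (α : K) (hα : α ≠ 0) (m : ℕ) (hm : 0 < m)
    (hedge : ∀ i ≤ d,
      PowerSeries.coeff (m * (d - i)) (F.coeff i) = (d.choose i : K) * α ^ (d - i))
    (habove : ∀ i ≤ d, ∀ j < m * (d - i), PowerSeries.coeff j (F.coeff i) = 0) :
    False := by
  have h := hedge (d - 1) (Nat.sub_le d 1)
  have hdd : d - (d - 1) = 1 := by omega
  rw [hsub, hdd] at h
  have hc : d.choose (d - 1) = d := by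
    rw [← Nat.choose_symm (Nat.sub_le d 1), hdd, Nat.choose_one_right]
  rw [hc] at h
  simp at h
  rcases h with h | h
  · exact hchar (by exact_mod_cast h)
  · exact hα h
end

section
/- Let K be a field and let ψ_{−1}, ψ_0, …, ψ_k ∈ K[x, y] (or K[[x]][y]) with ψ_{−1} = x, ψ_0 monic in y of degree 1, and deg_y(ψ_i) = deg_y(ψ_{i−1})·r_i for positive integers r_i ≥ 1 (i = 1,…,k), each ψ_i monic in y. Then every polynomial F ∈ K[[x]][y] admits a unique expansion F = Σ_{B ∈ ℬ} f_B Ψ^B, where Ψ^B = Π_{i=−1}^{k} ψ_i^{b_i}, f_B ∈ K, and ℬ is the set of tuples (b_{−1}, b_0, …, b_k) of nonnegative integers with b_{i−1} < r_i for i = 1,…,k. -/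
open Polynomial

namespace Stmt11Aux
open Finset

variable {K : Type*} [Field K] {k : ℕ}
  {ψ : ℕ → Polynomial (Polynomial K)} {r : ℕ → ℕ}

lemma dpos (hψ0d : (ψ 0).natDegree = 1)
    (hr : ∀ i, 1 ≤ i → i ≤ k → 1 ≤ r i)
    (hdeg : ∀ i, 1 ≤ i → i ≤ k → (ψ i).natDegree = (ψ (i-1)).natDegree * r i) :
    ∀ i, i ≤ k → 0 < (ψ i).natDegree := by
  intro i
  induction i with
  | zero => intro _; simp [hψ0d]
  | succ n ih =>
    intro h
    rw [hdeg (n+1) (by omega) h]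
    simp only [Nat.add_sub_cancel]
    exact Nat.mul_pos (ih (by omega)) (hr (n+1) (by omega) h)

lemma radix_lt (hψ0d : (ψ 0).natDegree = 1)
    (hdeg : ∀ i, 1 ≤ i → i ≤ k → (ψ i).natDegree = (ψ (i-1)).natDegree * r i) :
    ∀ m, m ≤ k → ∀ e : ℕ → ℕ, (∀ i, i < m → e i < r (i+1)) →
      ∑ i ∈ range m, e i * (ψ i).natDegree < (ψ m).natDegree := by
  intro m
  induction m with
  | zero => intro _ e _; simp [hψ0d]
  | succ m ih =>
    intro hm e he
    have h1 : ∑ i ∈ range m, e i * (ψ i).natDegree < (ψ m).natDegree :=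
      ih (by omega) e (fun i hi => he i (by omega))
    have h2 : (ψ (m+1)).natDegree = (ψ m).natDegree * r (m+1) := by
      have := hdeg (m+1) (by omega) hm
      simpa using this
    have h3 : e m + 1 ≤ r (m+1) := he m (by omega)
    calc ∑ i ∈ range (m+1), e i * (ψ i).natDegree
        = (∑ i ∈ range m, e i * (ψ i).natDegree) + e m * (ψ m).natDegree :=
          sum_range_succ _ _
      _ < (ψ m).natDegree + e m * (ψ m).natDegree := by omega
      _ = (e m + 1) * (ψ m).natDegree := by ring
      _ ≤ r (m+1) * (ψ m).natDegree := Nat.mul_le_mul_right _ h3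
      _ = (ψ (m+1)).natDegree := by rw [h2, Nat.mul_comm]

lemma radix_unique (hψ0d : (ψ 0).natDegree = 1)
    (hdeg : ∀ i, 1 ≤ i → i ≤ k → (ψ i).natDegree = (ψ (i-1)).natDegree * r i) :
    ∀ m, m ≤ k → ∀ e e' : ℕ → ℕ,
      (∀ i, i < m → e i < r (i+1)) → (∀ i, i < m → e' i < r (i+1)) →
      (∑ i ∈ range (m+1), e i * (ψ i).natDegree
        = ∑ i ∈ range (m+1), e' i * (ψ i).natDegree) →
      ∀ i, i ≤ m → e i = e' i := by
  intro m
  induction m with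
  | zero =>
    intro _ e e' _ _ hs i hi
    interval_cases i
    simpa [hψ0d] using hs
  | succ m ih =>
    intro hm e e' hb hb' hs i hi
    have hA : ∑ i ∈ range (m+1), e i * (ψ i).natDegree < (ψ (m+1)).natDegree :=
      radix_lt hψ0d hdeg (m+1) hm e hb
    have hA' : ∑ i ∈ range (m+1), e' i * (ψ i).natDegree < (ψ (m+1)).natDegree :=
      radix_lt hψ0d hdeg (m+1) hm e' hb'
    have hs2 : (∑ i ∈ range (m+1), e i * (ψ i).natDegree) + e (m+1) * (ψ (m+1)).natDegree
        = (∑ i ∈ range (m+1), e' i * (ψ i).natDegree) + e' (m+1) * (ψ (m+1)).natDegree := by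
      rw [← sum_range_succ, ← sum_range_succ]; exact hs
    have htop : e (m+1) = e' (m+1) := by
      rcases lt_trichotomy (e (m+1)) (e' (m+1)) with h | h | h
      · exfalso
        have h4 : e (m+1) * (ψ (m+1)).natDegree + (ψ (m+1)).natDegree
            ≤ e' (m+1) * (ψ (m+1)).natDegree := by
          have := Nat.mul_le_mul_right (ψ (m+1)).natDegree (Nat.succ_le_of_lt h)
          rw [Nat.succ_mul] at this; exact this
        omega
      · exact h
      · exfalso
        have h4 : e' (m+1) * (ψ (m+1)).natDegree + (ψ (m+1)).natDegree
            ≤ e (m+1) * (ψ (m+1)).natDegree := by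
          have := Nat.mul_le_mul_right (ψ (m+1)).natDegree (Nat.succ_le_of_lt h)
          rw [Nat.succ_mul] at this; exact this
        omega
    rcases Nat.lt_or_ge i (m+1) with h | h
    · have hs' : ∑ i ∈ range (m+1), e i * (ψ i).natDegree
          = ∑ i ∈ range (m+1), e' i * (ψ i).natDegree := by
        rw [htop] at hs2; exact Nat.add_right_cancel hs2
      exact ih (by omega) e e' (fun i hi => hb i (by omega)) (fun i hi => hb' i (by omega))
        hs' i (by omega)
    · have : i = m + 1 := by omega
      rw [this]; exact htop

lemma radix_exists (hψ0d : (ψ 0).natDegree = 1)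
    (hr : ∀ i, 1 ≤ i → i ≤ k → 1 ≤ r i)
    (hdeg : ∀ i, 1 ≤ i → i ≤ k → (ψ i).natDegree = (ψ (i-1)).natDegree * r i) :
    ∀ m, m ≤ k → ∀ n, ∃ e : ℕ → ℕ,
      (∀ i, i < m → e i < r (i+1)) ∧
      (∑ i ∈ range (m+1), e i * (ψ i).natDegree = n) ∧
      e m = n / (ψ m).natDegree := by
  intro m
  induction m with
  | zero => intro _ n; exact ⟨fun _ => n, by omega, by simp [hψ0d], by simp [hψ0d]⟩
  | succ m ih =>
    intro hm n
    obtain ⟨e, hb, hsum, hdiv⟩ := ih (by omega) (n % (ψ (m+1)).natDegree)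
    have hdm : 0 < (ψ m).natDegree := dpos hψ0d hr hdeg m (by omega)
    have hdm1 : 0 < (ψ (m+1)).natDegree := dpos hψ0d hr hdeg (m+1) hm
    have h2 : (ψ (m+1)).natDegree = (ψ m).natDegree * r (m+1) := by
      have := hdeg (m+1) (by omega) hm
      simpa using this
    refine ⟨Function.update e (m+1) (n / (ψ (m+1)).natDegree), ?_, ?_, ?_⟩
    · intro i hi
      rcases Nat.lt_or_ge i m with h | h
      · rw [Function.update_of_ne (by omega)]; exact hb i h
      · have him : i = m := by omega
        rw [Function.update_of_ne (by omega), him, hdiv]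
        have hlt : n % (ψ (m+1)).natDegree < (ψ m).natDegree * r (m+1) := by
          rw [← h2]; exact Nat.mod_lt _ hdm1
        exact Nat.div_lt_of_lt_mul hlt
    · rw [sum_range_succ]
      have : ∑ i ∈ range (m+1), (Function.update e (m+1) (n / (ψ (m+1)).natDegree)) i * (ψ i).natDegree
          = ∑ i ∈ range (m+1), e i * (ψ i).natDegree := by
        refine Finset.sum_congr rfl (fun i hi => ?_)
        rw [Function.update_of_ne (by simp at hi; omega)]
      rw [this, hsum, Function.update_self]
      exact Nat.mod_add_div' n (ψ (m+1)).natDegree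
    · rw [Function.update_self]


noncomputable def mon (k : ℕ) (ψ : ℕ → Polynomial (Polynomial K)) (B : ℕ →₀ ℕ) :
    Polynomial (Polynomial K) :=
  C X ^ B 0 * ∏ i ∈ range (k+1), ψ i ^ B (i+1)

noncomputable def Dg (k : ℕ) (ψ : ℕ → Polynomial (Polynomial K)) (B : ℕ →₀ ℕ) : ℕ :=
  ∑ i ∈ range (k+1), B (i+1) * (ψ i).natDegree

abbrev Adm (k : ℕ) (r : ℕ → ℕ) (B : ℕ →₀ ℕ) : Prop :=
  (∀ i, k + 2 ≤ i → B i = 0) ∧ (∀ i, 1 ≤ i → i ≤ k → B i < r i)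

lemma psi_monic (hψ0m : (ψ 0).Monic) (hmon : ∀ i, 1 ≤ i → i ≤ k → (ψ i).Monic) :
    ∀ i ∈ range (k+1), (ψ i).Monic := by
  intro i hi
  rcases Nat.eq_zero_or_pos i with h | h
  · rw [h]; exact hψ0m
  · exact hmon i h (by simp at hi; omega)

lemma prod_monic (hψ0m : (ψ 0).Monic) (hmon : ∀ i, 1 ≤ i → i ≤ k → (ψ i).Monic)
    (B : ℕ →₀ ℕ) : (∏ i ∈ range (k+1), ψ i ^ B (i+1)).Monic :=
  monic_prod_of_monic _ _ (fun i hi => (psi_monic hψ0m hmon i hi).pow _)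

lemma CX_pow_ne (n : ℕ) : (C X ^ n : Polynomial (Polynomial K)) ≠ 0 :=
  pow_ne_zero _ (by simp [C_eq_zero, X_ne_zero])

lemma mon_natDegree (hψ0m : (ψ 0).Monic) (hmon : ∀ i, 1 ≤ i → i ≤ k → (ψ i).Monic)
    (B : ℕ →₀ ℕ) : (mon k ψ B).natDegree = Dg k ψ B := by
  rw [mon, natDegree_mul (CX_pow_ne _) (prod_monic hψ0m hmon B).ne_zero]
  rw [natDegree_pow, natDegree_C, Nat.mul_zero, Nat.zero_add]
  rw [natDegree_prod _ _ (fun i hi => pow_ne_zero _ (psi_monic hψ0m hmon i hi).ne_zero)]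
  rw [Dg]
  exact Finset.sum_congr rfl (fun i _ => by rw [natDegree_pow])

lemma mon_leadingCoeff (hψ0m : (ψ 0).Monic) (hmon : ∀ i, 1 ≤ i → i ≤ k → (ψ i).Monic)
    (B : ℕ →₀ ℕ) : (mon k ψ B).leadingCoeff = X ^ B 0 := by
  rw [mon, leadingCoeff_mul, (prod_monic hψ0m hmon B).leadingCoeff, mul_one,
    leadingCoeff_pow, leadingCoeff_C]

lemma mon_coeff_top (hψ0m : (ψ 0).Monic) (hmon : ∀ i, 1 ≤ i → i ≤ k → (ψ i).Monic)
    (B : ℕ →₀ ℕ) : (mon k ψ B).coeff (Dg k ψ B) = X ^ B 0 := by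
  rw [← mon_natDegree hψ0m hmon B, coeff_natDegree, mon_leadingCoeff hψ0m hmon B]

lemma adm_inj (hψ0d : (ψ 0).natDegree = 1)
    (hdeg : ∀ i, 1 ≤ i → i ≤ k → (ψ i).natDegree = (ψ (i-1)).natDegree * r i)
    {B B' : ℕ →₀ ℕ} (hB : Adm k r B) (hB' : Adm k r B')
    (hD : Dg k ψ B = Dg k ψ B') (h0 : B 0 = B' 0) : B = B' := by
  have hdig := radix_unique hψ0d hdeg k le_rfl (fun i => B (i+1)) (fun i => B' (i+1))
    (fun i hi => hB.2 (i+1) (by omega) (by omega))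
    (fun i hi => hB'.2 (i+1) (by omega) (by omega)) hD
  ext j
  rcases Nat.eq_zero_or_pos j with h | h
  · rw [h]; exact h0
  rcases Nat.lt_or_ge j (k+2) with h2 | h2
  · have h3 := hdig (j-1) (by omega)
    have hj : j - 1 + 1 = j := by omega
    simpa only [hj] using h3
  · rw [hB.1 j h2, hB'.1 j h2]

lemma linIndep (hψ0m : (ψ 0).Monic) (hψ0d : (ψ 0).natDegree = 1)
    (hmon : ∀ i, 1 ≤ i → i ≤ k → (ψ i).Monic)
    (hdeg : ∀ i, 1 ≤ i → i ≤ k → (ψ i).natDegree = (ψ (i-1)).natDegree * r i) :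
    ∀ s : Finset (ℕ →₀ ℕ), (∀ B ∈ s, Adm k r B) → ∀ g : (ℕ →₀ ℕ) → K,
      ∑ B ∈ s, g B • mon k ψ B = 0 → ∀ B ∈ s, g B = 0 := by
  intro s
  induction s using Finset.strongInduction with
  | _ s ih =>
    intro hadm g hsum B hBs
    have hsne : s.Nonempty := ⟨B, hBs⟩
    set N := s.sup (Dg k ψ) with hN
    obtain ⟨B₀, hB₀s, hB₀⟩ := Finset.exists_mem_eq_sup s hsne (Dg k ψ)
    set s1 := s.filter (fun B => Dg k ψ B = N) with hs1
    set s2 := s.filter (fun B => ¬ Dg k ψ B = N) with hs2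
    have hB₀1 : B₀ ∈ s1 := Finset.mem_filter.mpr ⟨hB₀s, hB₀.symm⟩
    have hcoeff : ∑ B ∈ s, g B • (mon k ψ B).coeff N = 0 := by
      have := congrArg (fun p => Polynomial.coeff p N) hsum
      simpa [Polynomial.finset_sum_coeff, Polynomial.coeff_smul] using this
    have hsplit : ∑ B ∈ s1, g B • (mon k ψ B).coeff N
        + ∑ B ∈ s2, g B • (mon k ψ B).coeff N
        = ∑ B ∈ s, g B • (mon k ψ B).coeff N :=
      Finset.sum_filter_add_sum_filter_not s _ _
    have hz2 : ∀ B ∈ s2, g B • (mon k ψ B).coeff N = 0 := by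
      intro B hB
      rw [Polynomial.coeff_eq_zero_of_natDegree_lt, smul_zero]
      rw [mon_natDegree hψ0m hmon]
      have h1 : Dg k ψ B ≤ N := Finset.le_sup (Finset.mem_filter.mp hB).1
      have h2 : ¬ Dg k ψ B = N := (Finset.mem_filter.mp hB).2
      omega
    have hkey : ∑ B ∈ s1, g B • (X : Polynomial K) ^ B 0 = 0 := by
      have : ∑ B ∈ s1, g B • (mon k ψ B).coeff N = 0 := by
        rw [Finset.sum_eq_zero hz2] at hsplit
        rw [← hsplit] at hcoeff
        simpa using hcoeff
      rw [← this]
      refine Finset.sum_congr rfl (fun B hB => ?_)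
      have hDB : Dg k ψ B = N := (Finset.mem_filter.mp hB).2
      rw [← hDB, mon_coeff_top hψ0m hmon]
    have hg1 : ∀ B ∈ s1, g B = 0 := by
      intro B' hB'
      have := congrArg (fun p => Polynomial.coeff p (B' 0)) hkey
      simp only [Polynomial.finset_sum_coeff, Polynomial.coeff_smul,
        Polynomial.coeff_zero] at this
      rw [Finset.sum_eq_single B'] at this
      · simpa [Polynomial.coeff_X_pow] using this
      · intro B hB hne
        have hne0 : B 0 ≠ B' 0 := by
          intro h
          exact hne (adm_inj hψ0d hdeg (hadm B (Finset.mem_filter.mp hB).1)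
            (hadm B' (Finset.mem_filter.mp hB').1)
            (by rw [(Finset.mem_filter.mp hB).2, (Finset.mem_filter.mp hB').2]) h)
        simp [Polynomial.coeff_X_pow, Ne.symm hne0]
      · intro h; exact absurd hB' h
    by_cases hBN : Dg k ψ B = N
    · exact hg1 B (Finset.mem_filter.mpr ⟨hBs, hBN⟩)
    · have hss : s2 ⊂ s := by
        refine Finset.ssubset_iff_of_subset (Finset.filter_subset _ _) |>.mpr ?_
        exact ⟨B₀, hB₀s, fun h => (Finset.mem_filter.mp h).2 hB₀.symm⟩
      have hsum2 : ∑ B ∈ s2, g B • mon k ψ B = 0 := by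
        have h1 : ∑ B ∈ s1, g B • mon k ψ B + ∑ B ∈ s2, g B • mon k ψ B
            = ∑ B ∈ s, g B • mon k ψ B := Finset.sum_filter_add_sum_filter_not s _ _
        have h2 : ∑ B ∈ s1, g B • mon k ψ B = 0 :=
          Finset.sum_eq_zero (fun B hB => by rw [hg1 B hB, zero_smul])
        rw [h2, zero_add] at h1
        rw [h1, hsum]
      exact ih s2 hss (fun B hB => hadm B (Finset.filter_subset _ _ hB)) g hsum2 B
        (Finset.mem_filter.mpr ⟨hBs, hBN⟩)


lemma smul_eq_CC (a : K) (p : Polynomial (Polynomial K)) : a • p = C (C a) * p := by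
  rw [Algebra.smul_def]; congr 1

set_option maxHeartbeats 1000000 in
lemma spanAll (hψ0m : (ψ 0).Monic) (hψ0d : (ψ 0).natDegree = 1)
    (hmon : ∀ i, 1 ≤ i → i ≤ k → (ψ i).Monic)
    (hr : ∀ i, 1 ≤ i → i ≤ k → 1 ≤ r i)
    (hdeg : ∀ i, 1 ≤ i → i ≤ k → (ψ i).natDegree = (ψ (i-1)).natDegree * r i)
    (F : Polynomial (Polynomial K)) :
    F ∈ Submodule.span K
      (Set.range (fun B : {B : ℕ →₀ ℕ // Adm k r B} => mon k ψ B.1)) := by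
  set V := Submodule.span K
      (Set.range (fun B : {B : ℕ →₀ ℕ // Adm k r B} => mon k ψ B.1)) with hV
  have hmonV : ∀ B, Adm k r B → mon k ψ B ∈ V := fun B h =>
    Submodule.subset_span ⟨⟨B, h⟩, rfl⟩
  suffices H : ∀ N (F : Polynomial (Polynomial K)), F.natDegree < N → F ∈ V from
    H (F.natDegree + 1) F (Nat.lt_succ_self _)
  intro N
  induction N using Nat.strong_induction_on with
  | _ N ihN =>
    suffices H2 : ∀ m (F : Polynomial (Polynomial K)), F.natDegree < N →
        F.leadingCoeff.natDegree < m → F ∈ V by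
      intro F hF
      exact H2 (F.leadingCoeff.natDegree + 1) F hF (Nat.lt_succ_self _)
    intro m
    induction m using Nat.strong_induction_on with
    | _ m ihm =>
      intro F hFN hFm
      by_cases hF0 : F = 0
      · rw [hF0]; exact Submodule.zero_mem V
      set n := F.natDegree with hn
      set lc := F.leadingCoeff with hlc
      have hlc0 : lc ≠ 0 := leadingCoeff_ne_zero.mpr hF0
      set mx := lc.natDegree with hmx
      set a := lc.leadingCoeff with ha
      obtain ⟨e, hbnd, hesum, -⟩ := radix_exists hψ0d hr hdeg k le_rfl n
      set f : ℕ → ℕ := fun j => if j = 0 then mx else if j ≤ k + 1 then e (j-1) else 0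
        with hf
      have hfsup : ∀ j, f j ≠ 0 → j ∈ range (k+2) := by
        intro j hj
        simp only [hf] at hj
        by_contra hc
        simp only [Finset.mem_range, not_lt] at hc
        rw [if_neg (by omega), if_neg (by omega)] at hj
        exact hj rfl
      set B : ℕ →₀ ℕ := Finsupp.onFinset (range (k+2)) f hfsup with hB
      have hB0 : B 0 = mx := by simp [hB, hf]
      have hBsucc : ∀ i, i ≤ k → B (i+1) = e i := by
        intro i hi
        show f (i+1) = e i
        rw [hf]
        simp only
        rw [if_neg (by omega), if_pos (by omega)]
        simp
      have hAdm : Adm k r B := by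
        constructor
        · intro i hi
          show f i = 0
          rw [hf]; simp only
          rw [if_neg (by omega), if_neg (by omega)]
        · intro i h1 h2
          have h3 := hBsucc (i-1) (by omega)
          have h4 := hbnd (i-1) (by omega)
          have hi : i - 1 + 1 = i := by omega
          rw [hi] at h3 h4
          rw [h3]; exact h4
      have hDgB : Dg k ψ B = n := by
        rw [Dg, ← hesum]
        exact Finset.sum_congr rfl
          (fun i hi => by rw [hBsucc i (by simp only [Finset.mem_range] at hi; omega)])
      set G := F - a • mon k ψ B with hG
      have hdegmon : (mon k ψ B).natDegree = n := by
        rw [mon_natDegree hψ0m hmon, hDgB]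
      have hcoeffmon : (mon k ψ B).coeff n = X ^ mx := by
        rw [← hDgB, mon_coeff_top hψ0m hmon, hB0]
      have hsmuldeg : (a • mon k ψ B).natDegree ≤ n := by
        rw [smul_eq_CC]
        exact (natDegree_C_mul_le _ _).trans hdegmon.le
      have hGdeg : G.natDegree ≤ n :=
        (natDegree_sub_le F _).trans (max_le le_rfl hsmuldeg)
      have hFn : F.coeff n = lc := coeff_natDegree
      have hGcoeff : G.coeff n = lc.eraseLead := by
        rw [hG, coeff_sub, coeff_smul, hcoeffmon, hFn, smul_eq_C_mul]
        exact self_sub_C_mul_X_pow lc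
      have hmonBV : a • mon k ψ B ∈ V := Submodule.smul_mem V a (hmonV B hAdm)
      have hFG : F = G + a • mon k ψ B := by rw [hG]; ring
      rw [hFG]
      refine Submodule.add_mem V ?_ hmonBV
      by_cases hq : lc.eraseLead = 0
      · by_cases hG0 : G = 0
        · rw [hG0]; exact Submodule.zero_mem V
        · have hGlt : G.natDegree < n := by
            rcases Nat.lt_or_ge G.natDegree n with h | h
            · exact h
            · exfalso
              have hGn : G.natDegree = n := le_antisymm hGdeg h
              have : G.leadingCoeff = 0 := by
                rw [leadingCoeff, hGn, hGcoeff, hq]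
              exact hG0 (leadingCoeff_eq_zero.mp this)
          exact ihN n hFN G hGlt
      · have hGn : G.natDegree = n :=
          le_antisymm hGdeg (le_natDegree_of_ne_zero (by rw [hGcoeff]; exact hq))
        have hGlc : G.leadingCoeff = lc.eraseLead := by
          rw [leadingCoeff, hGn, hGcoeff]
        have hmx1 : 0 < mx := by
          by_contra h
          push_neg at h
          have hmx0 : lc.natDegree = 0 := by omega
          have : lc = C (lc.coeff 0) := eq_C_of_natDegree_eq_zero hmx0
          apply hq
          rw [this, eraseLead_C]
        have hlt : lc.eraseLead.natDegree < mx := by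
          have := eraseLead_natDegree_le lc
          omega
        exact ihm mx hFm G (by rw [hGn]; exact hFN) (by rw [hGlc]; exact hlt)

end Stmt11Aux



/-- Ψ-adic expansion: given a tower `ψ₋₁ = x`, `ψ₀, …, ψ_k` of polynomials in
`K[x][y]`, with `ψ₀` monic in `y` of degree `1` and `ψ_i` monic in `y` of degree
`deg_y(ψ_{i-1})·r_i` (`r_i ≥ 1`), every `F ∈ K[x][y]` has a unique expansion
`F = Σ_{B ∈ ℬ} f_B Ψ^B` with `f_B ∈ K`, where `B = (b₋₁, b₀, …, b_k)` runs over
tuples of naturals with `b_{i-1} < r_i` for `i = 1, …, k` (no bound on `b₋₁`, `b_k`).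
Here a tuple `B : ℕ →₀ ℕ` records `b₋₁ = B 0` (exponent of `x`) and
`b_{i-1} = B i` (exponent of `ψ_{i-1}`) for `i = 1, …, k+1`. -/
theorem stmt11 (K : Type*) [Field K] (k : ℕ)
    (ψ : ℕ → Polynomial (Polynomial K)) (r : ℕ → ℕ)
    (hψ0m : (ψ 0).Monic) (hψ0d : (ψ 0).natDegree = 1)
    (hmon : ∀ i, 1 ≤ i → i ≤ k → (ψ i).Monic)
    (hr : ∀ i, 1 ≤ i → i ≤ k → 1 ≤ r i)
    (hdeg : ∀ i, 1 ≤ i → i ≤ k → (ψ i).natDegree = (ψ (i - 1)).natDegree * r i)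
    (F : Polynomial (Polynomial K)) :
    ∃! c : (ℕ →₀ ℕ) →₀ K,
      (∀ B ∈ c.support,
        (∀ i, k + 2 ≤ i → B i = 0) ∧ (∀ i, 1 ≤ i → i ≤ k → B i < r i)) ∧
      F = ∑ B ∈ c.support,
        C (C (c B)) * C X ^ B 0 * ∏ i ∈ Finset.range (k + 1), ψ i ^ B (i + 1) := by
  classical
  have hterm : ∀ (a : K) (B : ℕ →₀ ℕ),
      C (C a) * C X ^ B 0 * ∏ i ∈ Finset.range (k+1), ψ i ^ B (i+1)
        = a • Stmt11Aux.mon k ψ B := by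
    intro a B
    rw [Stmt11Aux.smul_eq_CC, Stmt11Aux.mon, mul_assoc]
  obtain ⟨c₀, hc₀⟩ := Finsupp.mem_span_range_iff_exists_finsupp.mp
    (Stmt11Aux.spanAll hψ0m hψ0d hmon hr hdeg F)
  set c : (ℕ →₀ ℕ) →₀ K := c₀.mapDomain Subtype.val with hc
  have hsupp : ∀ B ∈ c.support, Stmt11Aux.Adm k r B := by
    intro B hB
    have h2 := Finsupp.mapDomain_support hB
    obtain ⟨b, hb, rfl⟩ := Finset.mem_image.mp h2
    exact b.2
  have hsum : c.sum (fun B a => a • Stmt11Aux.mon k ψ B) = F := by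
    rw [hc, Finsupp.sum_mapDomain_index_inj Subtype.val_injective]
    exact hc₀
  have hFc : F = ∑ B ∈ c.support,
      C (C (c B)) * C X ^ B 0 * ∏ i ∈ Finset.range (k+1), ψ i ^ B (i+1) := by
    rw [← hsum, Finsupp.sum]
    exact Finset.sum_congr rfl (fun B _ => (hterm (c B) B).symm)
  have key : ∀ c₁ c₂ : (ℕ →₀ ℕ) →₀ K,
      (∀ B ∈ c₁.support, Stmt11Aux.Adm k r B) →
      (∀ B ∈ c₂.support, Stmt11Aux.Adm k r B) →
      F = ∑ B ∈ c₁.support,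
        C (C (c₁ B)) * C X ^ B 0 * ∏ i ∈ Finset.range (k+1), ψ i ^ B (i+1) →
      F = ∑ B ∈ c₂.support,
        C (C (c₂ B)) * C X ^ B 0 * ∏ i ∈ Finset.range (k+1), ψ i ^ B (i+1) →
      c₁ = c₂ := by
    intro c₁ c₂ h₁ h₂ e₁ e₂
    set t := c₁.support ∪ c₂.support with ht
    have E : ∀ (cc : (ℕ →₀ ℕ) →₀ K), cc.support ⊆ t →
        F = ∑ B ∈ cc.support,
          C (C (cc B)) * C X ^ B 0 * ∏ i ∈ Finset.range (k+1), ψ i ^ B (i+1) →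
        ∑ B ∈ t, cc B • Stmt11Aux.mon k ψ B = F := by
      intro cc hsub he
      rw [← Finset.sum_subset hsub (fun B _ hB => by
        rw [Finsupp.notMem_support_iff.mp hB, zero_smul])]
      rw [he]
      exact Finset.sum_congr rfl (fun B _ => (hterm (cc B) B).symm)
    have E1 := E c₁ Finset.subset_union_left e₁
    have E2 := E c₂ Finset.subset_union_right e₂
    have hz : ∑ B ∈ t, (c₁ B - c₂ B) • Stmt11Aux.mon k ψ B = 0 := by
      simp only [sub_smul, Finset.sum_sub_distrib, E1, E2, sub_self]
    have hli := Stmt11Aux.linIndep hψ0m hψ0d hmon hdeg t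
      (fun B hB => by
        rcases Finset.mem_union.mp hB with h | h
        · exact h₁ B h
        · exact h₂ B h) _ hz
    ext B
    by_cases hB : B ∈ t
    · exact sub_eq_zero.mp (hli B hB)
    · rw [Finsupp.notMem_support_iff.mp (fun h => hB (Finset.mem_union_left _ h)),
        Finsupp.notMem_support_iff.mp (fun h => hB (Finset.mem_union_right _ h))]
  refine ⟨c, ⟨fun B hB => ⟨(hsupp B hB).1, (hsupp B hB).2⟩, hFc⟩, ?_⟩
  rintro c' ⟨hadm', heq'⟩
  exact key c' c (fun B hB => hadm' B hB) hsupp heq' hFc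
end
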